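/- arXiv:1110.3500 — 5 statements merged into one kernel-verified Lean document; each statement's English description precedes it below -/
import Mathlib

section
/- The function K̃0(s) = 4·(coth(s/2)/s - 2/s^2) is strictly positive for all real s ≠ 0. -/
noncomputable def Ktilde0 (s : ℝ) : ℝ :=
  4 * ((Real.cosh (s/2) / Real.sinh (s/2)) / s - 2 / s ^ 2)

/-! For `t > 0` one has `tanh t < t`, i.e. `sinh t < t cosh t`: the difference `t cosh t - sinh t`
vanishes at `0` and has derivative `t sinh t > 0`. With `t = s / 2` this is exactly
`coth (s / 2) / s > 2 / s ^ 2`, and `K̃₀` is even, so the sign of `s` does not matter. -/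

open Real

theorem Real.sinh_lt_mul_cosh {t : ℝ} (ht : 0 < t) : sinh t < t * cosh t := by
  have hmono : StrictMonoOn (fun x : ℝ => x * cosh x - sinh x) (Set.Ici 0) := by
    refine strictMonoOn_of_deriv_pos (convex_Ici 0) (by fun_prop) fun x hx => ?_
    rw [interior_Ici] at hx
    have hderiv : HasDerivAt (fun x : ℝ => x * cosh x - sinh x)
        (1 * cosh x + x * sinh x - cosh x) x :=
      ((hasDerivAt_id x).mul (hasDerivAt_cosh x)).sub (hasDerivAt_sinh x)
    rw [hderiv.deriv]
    linarith [mul_pos hx (sinh_pos_iff.2 hx)]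
  simpa using hmono Set.self_mem_Ici (Set.mem_Ici.2 ht.le) ht

theorem Ktilde0_neg (s : ℝ) : Ktilde0 (-s) = Ktilde0 s := by
  simp [Ktilde0, neg_div, div_neg]

theorem Ktilde0_pos_of_pos {s : ℝ} (hs : 0 < s) : 0 < Ktilde0 s := by
  set t := s / 2
  have ht : 0 < t := by positivity
  have hsinh : 0 < sinh t := sinh_pos_iff.2 ht
  have hK : Ktilde0 s = 2 * (t * cosh t - sinh t) / (t ^ 2 * sinh t) := by
    rw [Ktilde0, show s = 2 * t by ring]
    field_simp
    ring
  rw [hK]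
  exact div_pos (by linarith [sinh_lt_mul_cosh ht]) (by positivity)

theorem stmt_2 : ∀ s : ℝ, s ≠ 0 → 0 < Ktilde0 s := by
  intro s hs
  rcases hs.lt_or_gt with hneg | hpos
  · simpa only [Ktilde0_neg] using Ktilde0_pos_of_pos (neg_pos.2 hneg)
  · exact Ktilde0_pos_of_pos hpos
end

section
/- For all real s, t with s, t, s+t all nonzero, the function K̃0(s) = 4·(coth(s/2)/s - 2/s^2) and H̃0(s,t) = (4·sinh((s+t)/2)/(s+t))·H0(s,t), where H0 is given by the displayed formula, satisfy the functional relation -½·H̃0(s,t) = (K̃0(t) - K̃0(s))/(s+t) + (K̃0(s+t) - K̃0(t))/s - (K̃0(s+t) - K̃0(s))/t. -/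
noncomputable def H0 (s t : ℝ) : ℝ :=
  (t * (s + t) * Real.cosh s - s * (s + t) * Real.cosh t +
    (s - t) * (s + t + Real.sinh s + Real.sinh t - Real.sinh (s + t))) /
  (s * t * (s + t) * Real.sinh (s/2) * Real.sinh (t/2) * (Real.sinh ((s + t)/2)) ^ 2)

noncomputable def Htilde0 (s t : ℝ) : ℝ :=
  4 * (Real.sinh ((s + t)/2) / (s + t)) * H0 s t

/-! With `u = exp (s / 2)` and `v = exp (t / 2)`, every hyperbolic function in the identity is a
rational function of `u` and `v` (e.g. `sinh ((s + t) / 2) = ((u * v) ^ 2 - 1) / (2 * u * v)`), so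
the claim becomes an identity between rational functions of `s, t, u, v`, whose denominators vanish
only when `s`, `t` or `s + t` does. -/

open Real

lemma Real.sinh_eq_div_exp (x : ℝ) : sinh x = (exp x ^ 2 - 1) / (2 * exp x) := by
  rw [sinh_eq, exp_neg]
  field_simp

lemma Real.cosh_eq_div_exp (x : ℝ) : cosh x = (exp x ^ 2 + 1) / (2 * exp x) := by
  rw [cosh_eq, exp_neg]
  field_simp

lemma Real.exp_half_sq (x : ℝ) : exp (x / 2) ^ 2 = exp x := by
  rw [← exp_nat_mul]
  ring_nf

lemma Real.exp_half_sq_sub_one_ne_zero {x : ℝ} (hx : x ≠ 0) : exp (x / 2) ^ 2 - 1 ≠ 0 := by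
  rwa [exp_half_sq, sub_ne_zero, Ne, exp_eq_one_iff]

theorem stmt_4 : ∀ s t : ℝ, s ≠ 0 → t ≠ 0 → s + t ≠ 0 →
    -(1/2 : ℝ) * Htilde0 s t =
      (Ktilde0 t - Ktilde0 s) / (s + t) +
      (Ktilde0 (s + t) - Ktilde0 t) / s -
      (Ktilde0 (s + t) - Ktilde0 s) / t := by
  intro s t hs ht hst
  have hu := exp_half_sq_sub_one_ne_zero hs
  have hv := exp_half_sq_sub_one_ne_zero ht
  have huv := exp_half_sq_sub_one_ne_zero hst
  have exp_sum_half : exp ((s + t) / 2) = exp (s / 2) * exp (t / 2) := by rw [add_div, exp_add]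
  have exp_sum : exp (s + t) = exp (s / 2) ^ 2 * exp (t / 2) ^ 2 := by
    rw [exp_half_sq, exp_half_sq, exp_add]
  unfold Htilde0 H0 Ktilde0
  simp only [sinh_eq_div_exp, cosh_eq_div_exp, exp_sum, exp_sum_half, mul_pow, ← exp_half_sq s,
    ← exp_half_sq t] at huv ⊢
  have hu0 := (exp_pos (s / 2)).ne'
  have hv0 := (exp_pos (t / 2)).ne'
  field_simp
  ring
end

section
/- For all real s ≠ 0, (s/2)·H̃0(s,-s) = s·(d/ds)K̃0(s) + 2·(K̃0(s) - K̃0(0)), where K̃0(s) = 4·(coth(s/2)/s - 2/s^2), K̃0(0) = 2/3 (the limit value), and H̃0(s,-s) is the limit as t → -s of H̃0(s,t) = (4·sinh((s+t)/2)/(s+t))·H0(s,t). -/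
/-- The continuous extension of `H0` to the anti-diagonal `t = -s`. -/
noncomputable def H0anti (s : ℝ) : ℝ :=
  -4 * (3 - 3 * Real.exp (2*s) + s + 4 * Real.exp s * s + Real.exp (2*s) * s) /
    (3 * ((Real.exp s - 1) ^ 2 * s ^ 2))

/-- `H̃0(s, -s) = 2 · H0(s, -s)` (the limit value of `H̃0(s,t)` as `t → -s`). -/
noncomputable def Htilde0anti (s : ℝ) : ℝ := 2 * H0anti s

/-
Since `coth (s/2) = (eˢ + 1) / (eˢ - 1)`, both sides are rational functions of `s` and `eˢ`
(with `e²ˢ = (eˢ)²`), and the identity becomes a polynomial identity once the denominators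
`s` and `eˢ - 1` are cleared.
-/

namespace Real

lemma cosh_half_mul_two_exp_half (x : ℝ) : cosh (x / 2) * (2 * exp (x / 2)) = exp x + 1 := by
  rw [cosh_eq, div_mul_eq_mul_div, add_mul, mul_left_comm, ← exp_add, mul_left_comm, ← exp_add]
  simp only [neg_add_cancel, add_halves, exp_zero]
  ring

lemma sinh_half_mul_two_exp_half (x : ℝ) : sinh (x / 2) * (2 * exp (x / 2)) = exp x - 1 := by
  rw [sinh_eq, div_mul_eq_mul_div, sub_mul, mul_left_comm, ← exp_add, mul_left_comm, ← exp_add]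
  simp only [neg_add_cancel, add_halves, exp_zero]
  ring

lemma cosh_half_div_sinh_half (x : ℝ) :
    cosh (x / 2) / sinh (x / 2) = (exp x + 1) / (exp x - 1) := by
  rw [← cosh_half_mul_two_exp_half, ← sinh_half_mul_two_exp_half,
    mul_div_mul_right _ _ (by positivity)]

lemma exp_sub_one_ne_zero {x : ℝ} (hx : x ≠ 0) : exp x - 1 ≠ 0 :=
  sub_ne_zero.mpr (mt (exp_eq_one_iff x).mp hx)

end Real

open Real

-- Both sides are junk `0` at `s = 0`, so this holds as an equality of functions.
lemma Ktilde0_eq_exp : Ktilde0 = fun s ↦ 4 * ((exp s + 1) / ((exp s - 1) * s) - 2 / s ^ 2) := by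
  funext s
  rw [Ktilde0, cosh_half_div_sinh_half, div_div]

lemma hasDerivAt_Ktilde0 {s : ℝ} (hs : s ≠ 0) :
    HasDerivAt Ktilde0
      (4 * ((1 - exp s ^ 2 - 2 * exp s * s) / ((exp s - 1) ^ 2 * s ^ 2) + 4 / s ^ 3)) s := by
  have he := exp_sub_one_ne_zero hs
  rw [Ktilde0_eq_exp]
  have hnum := (hasDerivAt_exp s).add_const 1
  have hden := ((hasDerivAt_exp s).sub_const 1).fun_mul (hasDerivAt_id' s)
  have hpow := (hasDerivAt_const s (2 : ℝ)).fun_div (hasDerivAt_pow 2 s) (pow_ne_zero 2 hs)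
  refine (((hnum.fun_div hden (mul_ne_zero he hs)).fun_sub hpow).const_mul 4).congr_deriv ?_
  field_simp
  ring

theorem stmt_6 : ∀ s : ℝ, s ≠ 0 →
    s / 2 * Htilde0anti s = s * deriv Ktilde0 s + 2 * (Ktilde0 s - 2/3) := by
  intro s hs
  have he := exp_sub_one_ne_zero hs
  have hexp2 : exp (2 * s) = exp s ^ 2 := by rw [← exp_nat_mul]; norm_num
  rw [(hasDerivAt_Ktilde0 hs).deriv, Ktilde0_eq_exp, Htilde0anti, H0anti, hexp2]
  field_simp
  ring
end

section
/- For a, b > 0 with a ≠ 1, b ≠ 1, a ≠ b, the integral ∫_0^∞ (u+1)^{-1}(a·u+1)^{-1}(b·u+1)^{-1}·u du equals ((b-1)·log(a) - (a-1)·log(b)) / ((a-1)(b-1)(b-a)). -/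
/-!
Partial fractions give the integrand as `F'` for
`F u = c₁ log (u + 1) + c₂ log (a u + 1) + c₃ log (b u + 1)`, where `c₁ + c₂ + c₃ = 0`.
Because the coefficients sum to zero, the logarithmic growth cancels and `F` tends to
`c₂ log a + c₃ log b` at infinity, while `F 0 = 0`; the integrand is nonnegative, so the
improper integral is this limit.
-/

open MeasureTheory Filter Topology Real

theorem hasDerivAt_log_mul_add_one {p x : ℝ} (h : p * x + 1 ≠ 0) :
    HasDerivAt (fun x => log (p * x + 1)) (p / (p * x + 1)) x := by
  simpa using (((hasDerivAt_id x).const_mul p).add_const 1).log h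

theorem log_mul_add_one_eq {p x : ℝ} (hx : x ≠ 0) (hp : p + x⁻¹ ≠ 0) :
    log (p * x + 1) = log x + log (p + x⁻¹) := by
  rw [← log_mul hx hp, mul_add, mul_inv_cancel₀ hx, mul_comm]

theorem tendsto_log_mul_add_one_sub_log_mul_add_one {p q : ℝ} (hp : p ≠ 0) (hq : q ≠ 0) :
    Tendsto (fun x => log (p * x + 1) - log (q * x + 1)) atTop (𝓝 (log p - log q)) := by
  have tendsto_add_inv (r : ℝ) : Tendsto (fun x : ℝ => r + x⁻¹) atTop (𝓝 r) := by
    simpa using tendsto_inv_atTop_zero.const_add r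
  have hlim : Tendsto (fun x => log (p + x⁻¹) - log (q + x⁻¹)) atTop (𝓝 (log p - log q)) :=
    ((continuousAt_log hp).tendsto.comp (tendsto_add_inv p)).sub
      ((continuousAt_log hq).tendsto.comp (tendsto_add_inv q))
  refine hlim.congr' ?_
  filter_upwards [eventually_ne_atTop 0, (tendsto_add_inv p).eventually_ne hp,
    (tendsto_add_inv q).eventually_ne hq] with x hx hpx hqx
  rw [log_mul_add_one_eq hx hpx, log_mul_add_one_eq hx hqx]
  ring

section H111

variable {a b : ℝ}

noncomputable def h111Antideriv (a b u : ℝ) : ℝ :=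
  -1 / ((a - 1) * (b - 1)) * log (u + 1) + -1 / ((a - 1) * (a - b)) * log (a * u + 1)
    + -1 / ((b - 1) * (b - a)) * log (b * u + 1)

theorem h111Antideriv_zero : h111Antideriv a b 0 = 0 := by
  simp [h111Antideriv]

theorem h111_coeff_sum (ha1 : a ≠ 1) (hb1 : b ≠ 1) (hab : a ≠ b) :
    -1 / ((a - 1) * (a - b)) = -(-1 / ((a - 1) * (b - 1)) + -1 / ((b - 1) * (b - a))) := by
  field_simp [sub_ne_zero.2 ha1, sub_ne_zero.2 hb1, sub_ne_zero.2 hab, sub_ne_zero.2 hab.symm]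
  ring

theorem hasDerivAt_h111Antideriv (ha1 : a ≠ 1) (hb1 : b ≠ 1) (hab : a ≠ b) {u : ℝ}
    (h1 : u + 1 ≠ 0) (ha : a * u + 1 ≠ 0) (hb : b * u + 1 ≠ 0) :
    HasDerivAt (h111Antideriv a b)
      ((u + 1)⁻¹ * (a * u + 1)⁻¹ * (b * u + 1)⁻¹ * u) u := by
  have hlog : HasDerivAt (fun x => log (1 * x + 1)) (1 / (1 * u + 1)) u :=
    hasDerivAt_log_mul_add_one (by rwa [one_mul])
  simp only [one_mul] at hlog
  refine (((hlog.const_mul _).add ((hasDerivAt_log_mul_add_one ha).const_mul _)).add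
    ((hasDerivAt_log_mul_add_one hb).const_mul _)).congr_deriv ?_
  field_simp [sub_ne_zero.2 ha1, sub_ne_zero.2 hb1, sub_ne_zero.2 hab, sub_ne_zero.2 hab.symm]
  ring

theorem tendsto_h111Antideriv (ha : 0 < a) (hb : 0 < b) (ha1 : a ≠ 1) (hb1 : b ≠ 1)
    (hab : a ≠ b) :
    Tendsto (h111Antideriv a b) atTop
      (𝓝 (-1 / ((a - 1) * (a - b)) * log a + -1 / ((b - 1) * (b - a)) * log b)) := by
  have hlim := ((tendsto_log_mul_add_one_sub_log_mul_add_one one_ne_zero ha.ne').const_mul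
    (-1 / ((a - 1) * (b - 1)))).add
    ((tendsto_log_mul_add_one_sub_log_mul_add_one hb.ne' ha.ne').const_mul
    (-1 / ((b - 1) * (b - a))))
  rw [h111_coeff_sum ha1 hb1 hab]
  convert hlim using 1
  · ext u
    simp only [h111Antideriv, h111_coeff_sum ha1 hb1 hab, one_mul]
    ring
  · rw [log_one]
    congr 1
    ring

end H111

theorem stmt_13 (a b : ℝ) (ha : 0 < a) (hb : 0 < b) (ha1 : a ≠ 1) (hb1 : b ≠ 1)
    (hab : a ≠ b) :
    (∫ u in Set.Ioi (0:ℝ), (u + 1)⁻¹ * (a * u + 1)⁻¹ * (b * u + 1)⁻¹ * u) =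
      ((b - 1) * Real.log a - (a - 1) * Real.log b) /
        ((a - 1) * (b - 1) * (b - a)) := by
  have hderiv : ∀ u ∈ Set.Ici (0:ℝ), HasDerivAt (h111Antideriv a b)
      ((u + 1)⁻¹ * (a * u + 1)⁻¹ * (b * u + 1)⁻¹ * u) u := fun u (hu : 0 ≤ u) =>
    hasDerivAt_h111Antideriv ha1 hb1 hab (by positivity) (by positivity) (by positivity)
  have hnonneg : ∀ u ∈ Set.Ioi (0:ℝ),
      0 ≤ (u + 1)⁻¹ * (a * u + 1)⁻¹ * (b * u + 1)⁻¹ * u := fun u (hu : 0 < u) => by positivity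
  rw [integral_Ioi_of_hasDerivAt_of_nonneg' hderiv hnonneg
    (tendsto_h111Antideriv ha hb ha1 hb1 hab), h111Antideriv_zero, sub_zero]
  field_simp [sub_ne_zero.2 ha1, sub_ne_zero.2 hb1, sub_ne_zero.2 hab, sub_ne_zero.2 hab.symm]
  ring
end

section
/- For a, b > 0 with a ≠ 1, b ≠ 1, a ≠ b, the integral ∫_0^∞ (u+1)^{-2}(a·u+1)^{-1}(b·u+1)^{-1}·u^2 du equals [(b-1)^2·log(a) + (a-1)·((a-b)(b-1) - (a-1)·log(b))] / ((a-1)^2·(a-b)·(b-1)^2). -/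
/-!
By partial fractions, `u² / ((u+1)² (au+1) (bu+1))` is a combination of
`(c-1) / ((cu+1)(u+1))` for `c = a, b` (the derivative of `log ((cu+1)/(u+1))`) and of `1/(u+1)²`.
The resulting primitive tends to a finite limit at `+∞`, and since the integrand is nonnegative the
improper integral is that limit minus the value of the primitive at `0`.
-/

open MeasureTheory Filter Topology

lemma tendsto_linear_div_add_one_atTop (c : ℝ) :
    Tendsto (fun u : ℝ => (c * u + 1) / (u + 1)) atTop (𝓝 c) := by
  have hlim : Tendsto (fun u : ℝ => c + (1 - c) * (u + 1)⁻¹) atTop (𝓝 (c + (1 - c) * 0)) :=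
    tendsto_const_nhds.add <| (tendsto_inv_atTop_zero.comp
      (tendsto_atTop_add_const_right _ 1 tendsto_id)).const_mul _
  rw [mul_zero, add_zero] at hlim
  refine hlim.congr' ?_
  filter_upwards [eventually_gt_atTop (-1 : ℝ)] with u hu
  have hu1 : u + 1 ≠ 0 := by linarith
  field_simp
  ring

lemma tendsto_log_linear_div_add_one_atTop {c : ℝ} (hc : 0 < c) :
    Tendsto (fun u : ℝ => Real.log ((c * u + 1) / (u + 1))) atTop (𝓝 (Real.log c)) :=
  (Real.continuousAt_log hc.ne').tendsto.comp (tendsto_linear_div_add_one_atTop c)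

lemma hasDerivAt_log_linear_div_add_one {c x : ℝ} (hc : 0 < c * x + 1) (hx : 0 < x + 1) :
    HasDerivAt (fun u : ℝ => Real.log ((c * u + 1) / (u + 1)))
      ((c - 1) / ((c * x + 1) * (x + 1))) x := by
  have hnum : HasDerivAt (fun u : ℝ => c * u + 1) c x := by
    simpa using ((hasDerivAt_id x).const_mul c).add_const 1
  have hden : HasDerivAt (fun u : ℝ => u + 1) 1 x := (hasDerivAt_id x).add_const 1
  have hquot : HasDerivAt (fun u : ℝ => (c * u + 1) / (u + 1))
      ((c * (x + 1) - (c * x + 1) * 1) / (x + 1) ^ 2) x := hnum.div hden hx.ne'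
  convert hquot.log (by positivity) using 1
  field_simp
  ring

noncomputable def h211Primitive (a b u : ℝ) : ℝ :=
  Real.log ((a * u + 1) / (u + 1)) / ((a - 1) ^ 2 * (a - b))
    - Real.log ((b * u + 1) / (u + 1)) / ((b - 1) ^ 2 * (a - b))
    - (u + 1)⁻¹ / ((a - 1) * (b - 1))

lemma hasDerivAt_h211Primitive {a b x : ℝ} (ha : 0 < a) (hb : 0 < b) (ha1 : a ≠ 1)
    (hb1 : b ≠ 1) (hab : a ≠ b) (hx : 0 ≤ x) :
    HasDerivAt (h211Primitive a b)
      (((x + 1)⁻¹) ^ 2 * (a * x + 1)⁻¹ * (b * x + 1)⁻¹ * x ^ 2) x := by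
  have hx1 : 0 < x + 1 := by linarith
  have hax : 0 < a * x + 1 := by positivity
  have hbx : 0 < b * x + 1 := by positivity
  have hden : HasDerivAt (fun u : ℝ => u + 1) 1 x := (hasDerivAt_id x).add_const 1
  have hprim := (((hasDerivAt_log_linear_div_add_one hax hx1).div_const ((a - 1) ^ 2 * (a - b))).sub
    ((hasDerivAt_log_linear_div_add_one hbx hx1).div_const ((b - 1) ^ 2 * (a - b)))).sub
    ((hden.inv hx1.ne').div_const ((a - 1) * (b - 1)))
  refine hprim.congr_deriv ?_
  have ha1' : a - 1 ≠ 0 := sub_ne_zero.mpr ha1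
  have hb1' : b - 1 ≠ 0 := sub_ne_zero.mpr hb1
  have hab' : a - b ≠ 0 := sub_ne_zero.mpr hab
  field_simp
  ring

lemma tendsto_h211Primitive_atTop {a b : ℝ} (ha : 0 < a) (hb : 0 < b) :
    Tendsto (h211Primitive a b) atTop
      (𝓝 (Real.log a / ((a - 1) ^ 2 * (a - b)) - Real.log b / ((b - 1) ^ 2 * (a - b)))) := by
  have hrecip : Tendsto (fun u : ℝ => (u + 1)⁻¹ / ((a - 1) * (b - 1))) atTop (𝓝 0) := by
    simpa using (tendsto_inv_atTop_zero.comp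
      (tendsto_atTop_add_const_right _ 1 tendsto_id)).div_const ((a - 1) * (b - 1))
  have hlim := (((tendsto_log_linear_div_add_one_atTop ha).div_const ((a - 1) ^ 2 * (a - b))).sub
    ((tendsto_log_linear_div_add_one_atTop hb).div_const ((b - 1) ^ 2 * (a - b)))).sub hrecip
  rwa [sub_zero] at hlim

theorem stmt_14 (a b : ℝ) (ha : 0 < a) (hb : 0 < b) (ha1 : a ≠ 1) (hb1 : b ≠ 1)
    (hab : a ≠ b) :
    (∫ u in Set.Ioi (0:ℝ), ((u + 1)⁻¹) ^ 2 * (a * u + 1)⁻¹ * (b * u + 1)⁻¹ * u ^ 2) =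
      ((b - 1) ^ 2 * Real.log a +
        (a - 1) * ((a - b) * (b - 1) - (a - 1) * Real.log b)) /
      ((a - 1) ^ 2 * (a - b) * (b - 1) ^ 2) := by
  have hnonneg : ∀ x ∈ Set.Ioi (0:ℝ),
      0 ≤ ((x + 1)⁻¹) ^ 2 * (a * x + 1)⁻¹ * (b * x + 1)⁻¹ * x ^ 2 := fun x hx => by
    have hx0 : 0 ≤ x := le_of_lt hx
    positivity
  rw [integral_Ioi_of_hasDerivAt_of_nonneg'
    (fun x hx => hasDerivAt_h211Primitive ha hb ha1 hb1 hab hx) hnonneg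
    (tendsto_h211Primitive_atTop ha hb)]
  have ha1' : a - 1 ≠ 0 := sub_ne_zero.mpr ha1
  have hb1' : b - 1 ≠ 0 := sub_ne_zero.mpr hb1
  have hab' : a - b ≠ 0 := sub_ne_zero.mpr hab
  simp only [h211Primitive, mul_zero, zero_add, div_one, Real.log_one, zero_div, sub_zero]
  field_simp
  ring
end
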